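/- (Saito's criterion for multiarrangements) Let (𝒜, m) be a multiarrangement with defining polynomial Q(𝒜,m) = Π_{H∈𝒜} α_H^{m(H)} and let θ₁,…,θ_ℓ ∈ D(𝒜,m) be homogeneous derivations. Then det(θᵢ(x_j)) ∈ S·Q(𝒜,m). Moreover θ₁,…,θ_ℓ form a basis of D(𝒜,m) if and only if they are S-independent and Σᵢ deg θᵢ = |m| := Σ_{H∈𝒜} m(H). -/

import Mathlib

open MvPolynomial Module

attribute [local instance] Classical.propDecidable

namespace ArrPaper

variable {K : Type*} [Field K] {ℓ m : ℕ}

/-- The polynomial coordinate ring `S = K[x₁,…,x_ℓ]`. -/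
abbrev S (K : Type*) [Field K] (ℓ : ℕ) := MvPolynomial (Fin ℓ) K

/-- A polynomial derivation of `S`, given by its values on the variables. -/
abbrev Deriv (K : Type*) [Field K] (ℓ : ℕ) := Fin ℓ → S K ℓ

/-- The linear form `∑ αᵢ xᵢ` as a polynomial. -/
noncomputable def lin (α : Fin ℓ → K) : S K ℓ := ∑ i, C (α i) * X i

/-- The value `θ(α)` of a derivation on a linear form `α`. -/
noncomputable def applyD (θ : Deriv K ℓ) (α : Fin ℓ → K) : S K ℓ := ∑ i, C (α i) * θ i

lemma applyD_add (θ η : Deriv K ℓ) (α : Fin ℓ → K) :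
    applyD (θ + η) α = applyD θ α + applyD η α := by
  simp [applyD, mul_add, Finset.sum_add_distrib]

lemma applyD_smul (f : S K ℓ) (θ : Deriv K ℓ) (α : Fin ℓ → K) :
    applyD (f • θ) α = f * applyD θ α := by
  simp only [applyD, Pi.smul_apply, smul_eq_mul, Finset.mul_sum]
  exact Finset.sum_congr rfl fun i _ => by ring

/-- The logarithmic derivation module `D(𝒜)` of an arrangement, where the
arrangement is specified by the finite set of its defining linear forms. -/
noncomputable def logDer (A : Finset (Fin ℓ → K)) : Submodule (S K ℓ) (Deriv K ℓ) where
  carrier := {θ | ∀ α ∈ A, lin α ∣ applyD θ α}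
  add_mem' := by
    intro a b ha hb α hα
    rw [applyD_add]
    exact dvd_add (ha α hα) (hb α hα)
  zero_mem' := by intro α hα; simp [applyD]
  smul_mem' := by
    intro f θ hθ β hβ
    rw [applyD_smul]
    exact (hθ β hβ).mul_left f

/-- The logarithmic derivation module `D(𝒜, m)` of a multiarrangement. -/
noncomputable def logDerM (A : Finset (Fin ℓ → K)) (mult : (Fin ℓ → K) → ℕ) :
    Submodule (S K ℓ) (Deriv K ℓ) where
  carrier := {θ | ∀ α ∈ A, (lin α) ^ (mult α) ∣ applyD θ α}
  add_mem' := by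
    intro a b ha hb α hα
    rw [applyD_add]
    exact dvd_add (ha α hα) (hb α hα)
  zero_mem' := by intro α hα; simp [applyD]
  smul_mem' := by
    intro f θ hθ β hβ
    rw [applyD_smul]
    exact (hθ β hβ).mul_left f

/-- The Euler derivation. -/
noncomputable def eulerD (K : Type*) [Field K] (ℓ : ℕ) : Deriv K ℓ := fun i => X i

/-- A derivation is homogeneous of degree `d` if all its coefficients are. -/
def IsHomog (θ : Deriv K ℓ) (d : ℕ) : Prop := ∀ i, (θ i).IsHomogeneous d

/-- A family is a (free) basis of a submodule of the derivation module. -/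
def IsBasisOf {ι : Type*} (θ : ι → Deriv K ℓ) (M : Submodule (S K ℓ) (Deriv K ℓ)) : Prop :=
  (∀ i, θ i ∈ M) ∧ LinearIndependent (S K ℓ) θ ∧ Submodule.span (S K ℓ) (Set.range θ) = M

/-- `𝒜` is free with exponents `d₁,…,d_ℓ`. -/
def IsFreeWithExp (A : Finset (Fin ℓ → K)) (d : Fin ℓ → ℕ) : Prop :=
  ∃ θ : Fin ℓ → Deriv K ℓ, IsBasisOf θ (logDer A) ∧ ∀ i, IsHomog (θ i) (d i)

/-- `(𝒜, m)` is free with exponents `d₁,…,d_ℓ`. -/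
def IsFreeWithExpM (A : Finset (Fin ℓ → K)) (mult : (Fin ℓ → K) → ℕ) (d : Fin ℓ → ℕ) : Prop :=
  ∃ θ : Fin ℓ → Deriv K ℓ, IsBasisOf θ (logDerM A mult) ∧ ∀ i, IsHomog (θ i) (d i)

/-- The hyperplane `ker α ⊆ Kˡ` attached to a linear form `α`. -/
noncomputable def hyp (α : Fin ℓ → K) : Submodule K (Fin ℓ → K) :=
  LinearMap.ker (∑ i, α i • LinearMap.proj i : (Fin ℓ → K) →ₗ[K] K)

/-- The restriction `𝒜^H = {H ∩ L : L ∈ 𝒜'}` of an arrangement `𝒜'` to the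
hyperplane `H = ker α_H`, as a finite set of subspaces. -/
noncomputable def restH (A' : Finset (Fin ℓ → K)) (αH : Fin ℓ → K) :
    Finset (Submodule K (Fin ℓ → K)) :=
  A'.image (fun β => hyp αH ⊓ hyp β)

/-- The restriction `𝒜^X = {X ∩ H : H ∈ 𝒜, X ⊄ H}` to a subspace `X`. -/
noncomputable def restArr (A : Finset (Fin ℓ → K)) (Xs : Submodule K (Fin ℓ → K)) :
    Finset (Submodule K (Fin ℓ → K)) :=
  (A.filter (fun β => ¬ Xs ≤ hyp β)).image (fun β => Xs ⊓ hyp β)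

/-- Codimension of a subspace of `Kˡ`. -/
noncomputable def codim (Xs : Submodule K (Fin ℓ → K)) : ℕ := ℓ - Module.finrank K Xs

/-- The intersection lattice `L(𝒜)`. -/
noncomputable def LSet (A : Finset (Fin ℓ → K)) : Finset (Submodule K (Fin ℓ → K)) :=
  A.powerset.image (fun b => b.inf hyp)

/-- Pullback (restriction) of polynomial functions along a linear map
`ι : Kᵐ → Kˡ`. -/
noncomputable def pullback (ι : (Fin m → K) →ₗ[K] (Fin ℓ → K)) : S K ℓ →ₐ[K] S K m :=
  aeval (fun j => ∑ i, C (ι (Pi.single i 1) j) * X i)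

/-- The (Euler) restriction of a derivation onto the subspace `im ι ≅ Kᵐ`,
computed using chosen linear forms `γ i` lifting the coordinates of `Kᵐ`. -/
noncomputable def restD (ι : (Fin m → K) →ₗ[K] (Fin ℓ → K)) (γ : Fin m → (Fin ℓ → K))
    (θ : Deriv K ℓ) : Deriv K m :=
  fun i => pullback ι (applyD θ (γ i))

/-- `γ` is a system of coordinate lifts for `ι : Kᵐ → Kˡ`. -/
def CoordLifts (ι : (Fin m → K) →ₗ[K] (Fin ℓ → K)) (γ : Fin m → (Fin ℓ → K)) : Prop :=
  ∀ i, pullback ι (lin (γ i)) = X i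

/-- `B` (a finite set of forms on `Kᵐ`) represents the restricted arrangement
`𝒜^X` via the embedding `ι : Kᵐ ≅ X ⊆ Kˡ`. -/
def Represents (B : Finset (Fin m → K)) (ι : (Fin m → K) →ₗ[K] (Fin ℓ → K))
    (A : Finset (Fin ℓ → K)) (Xs : Submodule K (Fin ℓ → K)) : Prop :=
  (∀ b ∈ B, b ≠ 0) ∧ B.image (fun b => (hyp b).map ι) = restArr A Xs ∧
    B.card = (restArr A Xs).card

/-- The restricted arrangement `𝒜^X` is free with exponents `e`. -/
def RestFree (A : Finset (Fin ℓ → K)) (Xs : Submodule K (Fin ℓ → K)) (m : ℕ)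
    (e : Fin m → ℕ) : Prop :=
  ∃ (φ : (Fin m → K) ≃ₗ[K] Xs) (B : Finset (Fin m → K)),
    Represents B (Xs.subtype ∘ₗ φ.toLinearMap) A Xs ∧ IsFreeWithExp B e

/-- The Ziegler multiplicity of a hyperplane `ker b ⊆ Kᵐ ≅ H` obtained by
restricting `𝒜` onto `H = ker α_H`. -/
noncomputable def zMult (A : Finset (Fin ℓ → K)) (αH : Fin ℓ → K)
    (ι : (Fin m → K) →ₗ[K] (Fin ℓ → K)) (b : Fin m → K) : ℕ :=
  ((A.erase αH).filter (fun β => hyp αH ⊓ hyp β = (hyp b).map ι)).card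

/-- `θ ↦ θ(α)` as an `S`-linear map. -/
noncomputable def applyDL (α : Fin ℓ → K) : Deriv K ℓ →ₗ[S K ℓ] S K ℓ where
  toFun θ := applyD θ α
  map_add' a b := applyD_add a b α
  map_smul' f θ := by simpa using applyD_smul f θ α

/-- `D_H(𝒜) = {θ ∈ D(𝒜) : θ(α_H) = 0}`. -/
noncomputable def DH (A : Finset (Fin ℓ → K)) (αH : Fin ℓ → K) :
    Submodule (S K ℓ) (Deriv K ℓ) :=
  logDer A ⊓ LinearMap.ker (applyDL αH)

end ArrPaper

/-
The vector `(θᵢ(α_H))ᵢ` is the combination of the columns of `(θᵢ(xⱼ))` with coefficients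
`α_H(xⱼ)`, one of which is a unit, so `α_H ^ m(H)` divides the determinant; the `α_H` are
pairwise non-associate primes, hence `Q` divides it too. Write `det = Q * g`. By homogeneity
`deg g = ∑ deg θᵢ - |m|`, so the degree condition says exactly that `g` is a unit.

If `g` is a unit, Cramer's rule expresses any `η ∈ D(𝒜,m)` through the `θᵢ`, since replacing a
row by `η` gives a determinant that is again divisible by `Q`. Conversely, if the `θᵢ` form a
basis, `det θ` divides the determinant of every family in `D(𝒜,m)`. The family `Q ∂ⱼ` gives
`g ∣ Q ^ ℓ`, and the family `(Q / α_H ^ m(H)) E`, with `E` a family in `D(α_H ^ m(H))` of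
determinant `α_H ^ m(H)`, shows that `α_H ∤ g`. Hence `g` is coprime to `Q ^ ℓ`, so a unit.
-/

namespace Matrix

variable {R ι : Type*} [CommRing R] [Fintype ι] [DecidableEq ι]

theorem det_dvd_det_of_mem_span {θ μ : ι → ι → R}
    (h : ∀ k, μ k ∈ Submodule.span R (Set.range θ)) : (of θ).det ∣ (of μ).det := by
  choose N hN using fun k => (Submodule.mem_span_range_iff_exists_fun R).mp (h k)
  have hmul : of N * of θ = of μ := by
    ext k j
    simp [mul_apply, ← hN k, Finset.sum_apply]
  exact Dvd.intro_left _ (by rw [← hmul, det_mul])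

theorem mem_span_of_dvd_det_updateRow [IsDomain R] {θ : ι → ι → R} {η : ι → R}
    {q : R} {u : Rˣ} (hq : q ≠ 0) (hdet : (of θ).det = q * u)
    (h : ∀ i, q ∣ ((of θ).updateRow i η).det) :
    η ∈ Submodule.span R (Set.range θ) := by
  choose c hc using h
  have hcramer : (of θ)ᵀ.cramer η = q • c := by
    ext i
    rw [cramer_transpose_apply, hc, Pi.smul_apply, smul_eq_mul]
  have hcomb : c ᵥ* of θ = (u : R) • η := by
    have := mulVec_cramer (of θ)ᵀ η
    rw [hcramer, det_transpose, hdet, mulVec_transpose, smul_vecMul, mul_smul] at this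
    exact smul_right_injective _ hq this
  refine (Submodule.mem_span_range_iff_exists_fun R).mpr ⟨u⁻¹ • c, ?_⟩
  calc ∑ i, (u⁻¹ • c) i • θ i = (u⁻¹ • c) ᵥ* of θ := (vecMul_eq_sum _ _).symm
    _ = η := by rw [smul_vecMul, hcomb]; exact inv_smul_smul u η

theorem dvd_det_of_dvd_mulVec {M : Matrix ι ι R} {c : ι → R} {p : R} {j : ι}
    (hc : IsUnit (c j)) (h : ∀ k, p ∣ (M *ᵥ c) k) : p ∣ M.det := by
  choose w hw using h
  have hcol : (fun k => ∑ i, c i • M k i) = p • w := funext fun k => by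
    rw [Pi.smul_apply, smul_eq_mul, ← hw k, mulVec, dotProduct]
    simp only [smul_eq_mul, mul_comm]
  have := det_updateCol_sum M j c
  rw [hcol, det_updateCol_smul] at this
  simp only [smul_eq_mul] at this
  exact hc.dvd_mul_left.mp ⟨_, this.symm⟩

end Matrix

namespace MvPolynomial

variable {σ ι : Type*}

theorem isHomogeneous_det {R : Type*} [CommRing R] [Fintype ι] [DecidableEq ι]
    {M : Matrix ι ι (MvPolynomial σ R)} {d : ι → ℕ} (h : ∀ i j, (M i j).IsHomogeneous (d i)) :
    M.det.IsHomogeneous (∑ i, d i) := by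
  rw [Matrix.det_apply]
  refine IsHomogeneous.sum _ _ _ fun τ _ => ?_
  have hprod : (∏ i, M (τ i) i).IsHomogeneous (∑ i, d i) := by
    rw [← Equiv.sum_comp τ d]
    exact IsHomogeneous.prod _ _ _ fun i _ => h (τ i) i
  rcases Int.units_eq_one_or (Equiv.Perm.sign τ) with hs | hs <;> rw [hs]
  · simpa using hprod
  · simpa using hprod.neg

theorem IsHomogeneous.isUnit_iff_eq_of_eq_mul {K : Type*} [Field K]
    {p q g : MvPolynomial σ K} {a b : ℕ} (hp : p.IsHomogeneous a) (hq : q.IsHomogeneous b)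
    (hp0 : p ≠ 0) (h : p = q * g) : IsUnit g ↔ a = b := by
  have hq0 : q ≠ 0 := by rintro rfl; simp_all
  have hg0 : g ≠ 0 := by rintro rfl; simp_all
  have hdeg : a = b + g.totalDegree := by
    rw [← hp.totalDegree hp0, ← hq.totalDegree hq0, h, totalDegree_mul_of_isDomain hq0 hg0]
  rw [isUnit_iff_totalDegree_of_isReduced, hdeg, add_eq_left]
  refine ⟨And.right, fun hdeg0 => ⟨Ne.isUnit fun hc => hg0 ?_, hdeg0⟩⟩
  rw [totalDegree_eq_zero_iff_eq_C.mp hdeg0, hc, C_0]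

end MvPolynomial

namespace ArrPaper

variable {K : Type*} [Field K] {ℓ : ℕ}

theorem coeff_single_lin (α : Fin ℓ → K) (i : Fin ℓ) :
    coeff (Finsupp.single i 1) (lin α) = α i := by
  simp [lin, coeff_sum, coeff_C_mul, coeff_X, Finsupp.single_eq_single_iff]

theorem lin_injective : Function.Injective (lin : (Fin ℓ → K) → S K ℓ) := fun α β h =>
  funext fun i => by rw [← coeff_single_lin α i, h, coeff_single_lin]

theorem lin_ne_zero {α : Fin ℓ → K} (hα : α ≠ 0) : lin α ≠ 0 := fun h =>
  hα (lin_injective (h.trans (by simp [lin])))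

theorem lin_smul (c : K) (α : Fin ℓ → K) : lin (c • α) = C c * lin α := by
  simp [lin, Finset.mul_sum, mul_assoc]

theorem isHomogeneous_lin (α : Fin ℓ → K) : (lin α).IsHomogeneous 1 :=
  IsHomogeneous.sum _ _ _ fun i _ => isHomogeneous_C_mul_X (α i) i

theorem totalDegree_lin {α : Fin ℓ → K} (hα : α ≠ 0) : (lin α).totalDegree = 1 :=
  (isHomogeneous_lin α).totalDegree (lin_ne_zero hα)

theorem irreducible_lin {α : Fin ℓ → K} (hα : α ≠ 0) : Irreducible (lin α) := by
  refine irreducible_of_totalDegree_eq_one (totalDegree_lin hα) fun c hc => ?_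
  obtain ⟨i, hi⟩ := Function.ne_iff.mp hα
  exact isUnit_of_dvd_unit (by simpa [coeff_single_lin] using hc (Finsupp.single i 1))
    (Ne.isUnit hi)

theorem exists_eq_smul_of_lin_dvd_lin {α β : Fin ℓ → K} (hβ : β ≠ 0) (h : lin α ∣ lin β) :
    ∃ c : K, β = c • α := by
  obtain ⟨g, hg⟩ := h
  have hα : α ≠ 0 := by rintro rfl; exact lin_ne_zero hβ (by simpa [lin] using hg)
  have hg0 : g ≠ 0 := by rintro rfl; exact lin_ne_zero hβ (by simpa using hg)
  have hdeg : g.totalDegree = 0 := by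
    have := congrArg totalDegree hg
    rw [totalDegree_mul_of_isDomain (lin_ne_zero hα) hg0, totalDegree_lin hα,
      totalDegree_lin hβ] at this
    omega
  refine ⟨g.coeff 0, lin_injective ?_⟩
  rw [lin_smul, hg, mul_comm, ← totalDegree_eq_zero_iff_eq_C.mp hdeg]

theorem isRelPrime_lin {α β : Fin ℓ → K} (hα : α ≠ 0) (h : ∀ c : K, β ≠ c • α) :
    IsRelPrime (lin α) (lin β) := by
  have hβ : β ≠ 0 := by rintro rfl; exact h 0 (zero_smul K α).symm
  exact (irreducible_lin hα).isRelPrime_iff_not_dvd.mpr fun hd =>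
    (exists_eq_smul_of_lin_dvd_lin hβ hd).elim h

theorem applyD_single (j : Fin ℓ) (f : S K ℓ) (α : Fin ℓ → K) :
    applyD (Pi.single j f) α = C (α j) * f := by
  simp [applyD, Pi.single_apply]

theorem applyD_update (θ : Deriv K ℓ) (j : Fin ℓ) (f : S K ℓ) (α : Fin ℓ → K) :
    applyD (Function.update θ j f) α = applyD θ α + C (α j) * (f - θ j) := by
  change applyDL α _ = applyDL α θ + _
  rw [Pi.update_eq_sub_add_single, map_add, map_sub]
  change _ - applyD _ α + applyD _ α = _
  rw [applyD_single, applyD_single]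
  ring

theorem exists_det_eq_lin_pow {α : Fin ℓ → K} (hα : α ≠ 0) (n : ℕ) :
    ∃ E : Fin ℓ → Deriv K ℓ, (∀ k, lin α ^ n ∣ applyD (E k) α) ∧
      (Matrix.of E).det = lin α ^ n := by
  obtain ⟨j, hj⟩ : ∃ j, α j ≠ 0 := Function.ne_iff.mp hα
  -- rows `∂ₖ - (αₖ / αⱼ) ∂ⱼ` for `k ≠ j`, which kill `α`, and `α ^ n ∂ⱼ`
  let v : Fin ℓ → S K ℓ := Function.update (fun k => -C (α k / α j)) j (lin α ^ n)
  refine ⟨fun k => Function.update (Pi.single k 1) j (v k), fun k => ?_, ?_⟩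
  · rw [applyD_update, applyD_single, mul_one]
    rcases eq_or_ne k j with rfl | hk
    · exact ⟨C (α k), by simp only [v, Function.update_self, Pi.single_eq_same]; ring⟩
    · simp only [v, Function.update_of_ne hk, Pi.single_eq_of_ne hk.symm, sub_zero]
      rw [mul_neg, ← C_mul, mul_div_cancel₀ _ hj, add_neg_cancel]
      exact dvd_zero _
  · have hE : Matrix.of (fun k => Function.update (Pi.single k 1) j (v k))
        = (1 : Matrix (Fin ℓ) (Fin ℓ) (S K ℓ)).updateCol j v := by
      ext k i
      simp [Matrix.updateCol_apply, Function.update_apply, Matrix.one_eq_pi_single]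
    rw [hE, ← Matrix.cramer_apply, Matrix.cramer_one]
    simp [v]

theorem dvd_det_of_dvd_applyD {p : S K ℓ} {α : Fin ℓ → K} (hα : α ≠ 0)
    {μ : Fin ℓ → Deriv K ℓ} (h : ∀ k, p ∣ applyD (μ k) α) : p ∣ (Matrix.of μ).det := by
  obtain ⟨j, hj⟩ : ∃ j, α j ≠ 0 := Function.ne_iff.mp hα
  refine Matrix.dvd_det_of_dvd_mulVec (c := fun i => C (α i)) (hj.isUnit.map C) fun k => ?_
  simpa [applyD, Matrix.mulVec, dotProduct, mul_comm] using h k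

theorem pairwise_isRelPrime_lin {A : Finset (Fin ℓ → K)} (hA0 : ∀ α ∈ A, α ≠ 0)
    (hnp : ∀ α ∈ A, ∀ β ∈ A, α ≠ β → ∀ c : K, α ≠ c • β) :
    (A : Set (Fin ℓ → K)).Pairwise fun α β => IsRelPrime (lin α) (lin β) :=
  fun α hα β hβ hne => isRelPrime_lin (hA0 α hα) (hnp β hβ α hα hne.symm)

theorem prod_dvd_det_of_mem_logDerM {A : Finset (Fin ℓ → K)} (hA0 : ∀ α ∈ A, α ≠ 0)
    (hnp : ∀ α ∈ A, ∀ β ∈ A, α ≠ β → ∀ c : K, α ≠ c • β) (mult : (Fin ℓ → K) → ℕ)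
    {μ : Fin ℓ → Deriv K ℓ} (hμ : ∀ k, μ k ∈ logDerM A mult) :
    (∏ α ∈ A, lin α ^ mult α) ∣ (Matrix.of μ).det :=
  Finset.prod_dvd_of_isRelPrime
    (fun _ hα _ hβ hne => (pairwise_isRelPrime_lin hA0 hnp hα hβ hne).pow)
    fun α hα => dvd_det_of_dvd_applyD (hA0 α hα) fun k => hμ k α hα

theorem pi_single_mem_logDerM (A : Finset (Fin ℓ → K)) (mult : (Fin ℓ → K) → ℕ) (j : Fin ℓ) :
    Pi.single j (∏ α ∈ A, lin α ^ mult α) ∈ logDerM A mult := fun α hα => by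
  rw [applyD_single]
  exact (Finset.dvd_prod_of_mem _ hα).mul_left _

theorem exists_mem_logDerM_det_eq {A : Finset (Fin ℓ → K)} (mult : (Fin ℓ → K) → ℕ)
    {α : Fin ℓ → K} (hα : α ≠ 0) (hαA : α ∈ A) :
    ∃ μ : Fin ℓ → Deriv K ℓ, (∀ k, μ k ∈ logDerM A mult) ∧
      (Matrix.of μ).det = (∏ β ∈ A.erase α, lin β ^ mult β) ^ ℓ * lin α ^ mult α := by
  obtain ⟨E, hE, hdet⟩ := exists_det_eq_lin_pow hα (mult α)
  refine ⟨fun k => (∏ β ∈ A.erase α, lin β ^ mult β) • E k, fun k β hβ => ?_, ?_⟩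
  · rw [applyD_smul]
    rcases eq_or_ne β α with rfl | hne
    · exact (hE k).mul_left _
    · exact (Finset.dvd_prod_of_mem _ (Finset.mem_erase.mpr ⟨hne, hβ⟩)).mul_right _
  · change ((∏ β ∈ A.erase α, lin β ^ mult β) • Matrix.of E).det = _
    rw [Matrix.det_smul, Fintype.card_fin, hdet]

theorem isUnit_of_isBasisOf {A : Finset (Fin ℓ → K)} (hA0 : ∀ α ∈ A, α ≠ 0)
    (hnp : ∀ α ∈ A, ∀ β ∈ A, α ≠ β → ∀ c : K, α ≠ c • β) {mult : (Fin ℓ → K) → ℕ}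
    {θ : Fin ℓ → Deriv K ℓ} (hb : IsBasisOf θ (logDerM A mult)) {g : S K ℓ}
    (hg : (Matrix.of θ).det = (∏ α ∈ A, lin α ^ mult α) * g) : IsUnit g := by
  set Q := ∏ α ∈ A, lin α ^ mult α
  have hdvd (μ : Fin ℓ → Deriv K ℓ) (hμ : ∀ k, μ k ∈ logDerM A mult) :
      Q * g ∣ (Matrix.of μ).det :=
    hg ▸ Matrix.det_dvd_det_of_mem_span fun k => hb.2.2 ▸ hμ k
  have hgQ : g ∣ Q ^ ℓ := by
    have hdiag : Matrix.of (fun j : Fin ℓ => Pi.single j Q) = Matrix.diagonal fun _ => Q := by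
      ext i j
      simp [Matrix.diagonal_apply, Pi.single_apply, eq_comm]
    have := hdvd _ (pi_single_mem_logDerM A mult)
    rw [hdiag, Matrix.det_diagonal, Finset.prod_const, Finset.card_univ, Fintype.card_fin] at this
    exact dvd_of_mul_left_dvd this
  have hrel (α : Fin ℓ → K) (hα : α ∈ A) : IsRelPrime g (lin α) := by
    have hirr := irreducible_lin (hA0 α hα)
    refine (hirr.isRelPrime_iff_not_dvd.mpr fun hαg => ?_).symm
    obtain ⟨μ, hμ, hdet⟩ := exists_mem_logDerM_det_eq mult (hA0 α hα) hα
    set P := ∏ β ∈ A.erase α, lin β ^ mult β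
    have hPα : lin α ^ mult α * (P * lin α) ∣ lin α ^ mult α * P ^ ℓ :=
      calc lin α ^ mult α * (P * lin α) = Q * lin α := by
            rw [← mul_assoc, Finset.mul_prod_erase A (fun β => lin β ^ mult β) hα, mul_comm]
        _ ∣ Q * g := mul_dvd_mul_left Q hαg
        _ ∣ (Matrix.of μ).det := hdvd μ hμ
        _ = lin α ^ mult α * P ^ ℓ := by rw [hdet, mul_comm]
    have hαP : lin α ∣ P ^ ℓ := dvd_of_mul_left_dvd
      ((mul_dvd_mul_iff_left (pow_ne_zero _ (lin_ne_zero (hA0 α hα)))).mp hPα)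
    have hrelP : IsRelPrime (lin α) P := IsRelPrime.prod_right fun β hβ =>
      (pairwise_isRelPrime_lin hA0 hnp hα (Finset.mem_of_mem_erase hβ)
        (Finset.ne_of_mem_erase hβ).symm).pow_right
    exact hirr.not_isUnit (hrelP.pow_right.isUnit_of_dvd hαP)
  exact (IsRelPrime.prod_right fun α hα => (hrel α hα).pow_right).pow_right.isUnit_of_dvd hgQ

end ArrPaper

open ArrPaper in
theorem stmt11_general {K : Type*} [Field K] {ℓ : ℕ} (A : Finset (Fin ℓ → K))
    (hA0 : ∀ α ∈ A, α ≠ 0)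
    (hnp : ∀ α ∈ A, ∀ β ∈ A, α ≠ β → ∀ c : K, α ≠ c • β)
    (mult : (Fin ℓ → K) → ℕ)
    (θ : Fin ℓ → Deriv K ℓ) (hθ : ∀ i, θ i ∈ logDerM A mult)
    (d : Fin ℓ → ℕ) (hhom : ∀ i, IsHomog (θ i) (d i)) :
    (∏ α ∈ A, lin α ^ mult α) ∣ Matrix.det (Matrix.of fun i j => θ i j) ∧
    (IsBasisOf θ (logDerM A mult) ↔
      LinearIndependent (S K ℓ) θ ∧ ∑ i, d i = ∑ α ∈ A, mult α) := by
  have hdvd := prod_dvd_det_of_mem_logDerM hA0 hnp mult hθ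
  refine ⟨hdvd, ?_⟩
  obtain ⟨g, hg⟩ := hdvd
  have hQ : (∏ α ∈ A, lin α ^ mult α).IsHomogeneous (∑ α ∈ A, mult α) :=
    IsHomogeneous.prod _ _ _ fun α _ => by simpa using (isHomogeneous_lin α).pow (mult α)
  have hdet0 (hli : LinearIndependent (S K ℓ) θ) : (Matrix.of θ).det ≠ 0 :=
    Matrix.nonsingular_iff_det_ne_zero.mp (Matrix.linearIndependent_row_iff.mp hli)
  have hunit (hli : LinearIndependent (S K ℓ) θ) : IsUnit g ↔ ∑ i, d i = ∑ α ∈ A, mult α :=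
    (isHomogeneous_det fun i j => hhom i j).isUnit_iff_eq_of_eq_mul hQ (hdet0 hli) hg
  constructor
  · intro hb
    exact ⟨hb.2.1, (hunit hb.2.1).mp (isUnit_of_isBasisOf hA0 hnp hb hg)⟩
  · rintro ⟨hli, hsum⟩
    obtain ⟨u, rfl⟩ := (hunit hli).mpr hsum
    refine ⟨hθ, hli, le_antisymm (Submodule.span_le.mpr (Set.range_subset_iff.mpr hθ))
      fun η hη => ?_⟩
    refine Matrix.mem_span_of_dvd_det_updateRow (left_ne_zero_of_mul (hg ▸ hdet0 hli)) hg
      fun i => prod_dvd_det_of_mem_logDerM hA0 hnp mult ?_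
    exact (Function.forall_update_iff θ fun _ ζ => ζ ∈ logDerM A mult).mpr ⟨hη, fun k _ => hθ k⟩

open ArrPaper in
/-- Saito's criterion for multiarrangements. -/
theorem stmt11 {K : Type*} [Field K] {ℓ : ℕ} (A : Finset (Fin ℓ → K))
    (hA0 : ∀ α ∈ A, α ≠ 0)
    (hnp : ∀ α ∈ A, ∀ β ∈ A, α ≠ β → ∀ c : K, α ≠ c • β)
    (mult : (Fin ℓ → K) → ℕ) (hm : ∀ α ∈ A, 0 < mult α)
    (θ : Fin ℓ → Deriv K ℓ) (hθ : ∀ i, θ i ∈ logDerM A mult)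
    (d : Fin ℓ → ℕ) (hhom : ∀ i, IsHomog (θ i) (d i)) :
    (∏ α ∈ A, lin α ^ mult α) ∣ Matrix.det (Matrix.of fun i j => θ i j) ∧
    (IsBasisOf θ (logDerM A mult) ↔
      LinearIndependent (S K ℓ) θ ∧ ∑ i, d i = ∑ α ∈ A, mult α) :=
  stmt11_general A hA0 hnp mult θ hθ d hhom
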